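/- Let S = ⟨qm₁,…,qm_d, pn₁,…,pn_k⟩ be a specific gluing of S₁ and S₂. Then ord_S(qx) = ord_{S₁}(x) for every x∈S₁. -/

import Mathlib

open scoped Pointwise

/-- `S ⊆ ℕ` is a numerical semigroup: it contains `0`, is closed under
addition, and has finite complement in `ℕ`. -/
def IsNumSgp (S : Set ℕ) : Prop :=
  (0 : ℕ) ∈ S ∧ (∀ a ∈ S, ∀ b ∈ S, a + b ∈ S) ∧ {x : ℕ | x ∉ S}.Finite

/-- `nM S t` is the `t`-fold sumset of the maximal ideal `M = S \ {0}`,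
with the convention `nM S 0 = S`. -/
def nM (S : Set ℕ) : ℕ → Set ℕ
  | 0 => S
  | t + 1 => (S \ {0}) + nM S t

/-- the order of `s` with respect to `S` : the largest `t` with `s ∈ tM`. -/
noncomputable def ordS (S : Set ℕ) (s : ℕ) : ℕ := sSup {t : ℕ | s ∈ nM S t}

/-- the multiplicity of `S` : its least nonzero element. -/
noncomputable def mult (S : Set ℕ) : ℕ := sInf {x : ℕ | x ∈ S ∧ x ≠ 0}

/-- the Apéry set of `S` with respect to `x` : elements `s ∈ S` with `s - x ∉ S`. -/
def Ap (S : Set ℕ) (x : ℕ) : Set ℕ := {s : ℕ | s ∈ S ∧ ¬ ∃ t ∈ S, s = t + x}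

/-- membership of an integer in (the image in `ℤ` of) `S`. -/
def zmem (S : Set ℕ) (z : ℤ) : Prop := ∃ t ∈ S, (t : ℤ) = z

/-- the Frobenius number of `S` : the largest integer not in `S`. -/
noncomputable def Frob (S : Set ℕ) : ℤ := sSup {z : ℤ | ¬ zmem S z}

/-- `S` is symmetric: for every integer `z`, `z ∈ S` iff `F(S) - z ∉ S`. -/
def IsSymmetric (S : Set ℕ) : Prop := ∀ z : ℤ, zmem S z ↔ ¬ zmem S (Frob S - z)

/-- the set of maximal elements of `Ap S x` with respect to the order
`u ⪯ v` iff `v = u + z` for some `z ∈ S`. -/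
def MaxAp (S : Set ℕ) (x : ℕ) : Set ℕ :=
  {w : ℕ | w ∈ Ap S x ∧ ∀ y ∈ Ap S x, (∃ z ∈ S, y = w + z) → y = w}

/-- the set of maximal elements of `Ap S x` with respect to the order
`u ⪯_M v` iff `v = u + z` for some `z ∈ S` with `ord(v) = ord(u) + ord(z)`. -/
def MaxMAp (S : Set ℕ) (x : ℕ) : Set ℕ :=
  {w : ℕ | w ∈ Ap S x ∧ ∀ y ∈ Ap S x,
    (∃ z ∈ S, y = w + z ∧ ordS S y = ordS S w + ordS S z) → y = w}

/-- `S` is M-pure with respect to `x` : all maximal elements of `Ap S x`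
under `⪯_M` have the same order. -/
def MPureWrt (S : Set ℕ) (x : ℕ) : Prop :=
  ∀ w ∈ MaxMAp S x, ∀ w' ∈ MaxMAp S x, ordS S w = ordS S w'

/-- `S` is M-pure : it is M-pure with respect to its multiplicity. -/
def MPure (S : Set ℕ) : Prop := MPureWrt S (mult S)

/-- `β_i(x)` : the number of elements of `Ap S x` of order `i`. -/
noncomputable def betaS (S : Set ℕ) (x i : ℕ) : ℕ := {w ∈ Ap S x | ordS S w = i}.ncard

/-- `d(x)` : the maximal order of an element of `Ap S x`. -/
noncomputable def dS (S : Set ℕ) (x : ℕ) : ℕ := sSup (ordS S '' Ap S x)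

/-- the reduction number of `S` : the least `r` with `(r+1)M = m(S) + rM`. -/
noncomputable def redNum (S : Set ℕ) : ℕ :=
  sInf {r : ℕ | nM S (r + 1) = (fun y => mult S + y) '' nM S r}

/-- `l_x(S) = max { ord(s+x) - ord(x) - ord(s) : s ∈ S, ord(s) ≤ r }`. -/
noncomputable def lS (S : Set ℕ) (x : ℕ) : ℕ :=
  sSup {t : ℕ | ∃ s ∈ S, ordS S s ≤ redNum S ∧ t = ordS S (s + x) - ordS S x - ordS S s}

/-- the Hilbert function of `S`. -/
noncomputable def HilbS (S : Set ℕ) (t : ℕ) : ℕ := (nM S t \ nM S (t + 1)).ncard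

/-- The data of a gluing `S = ⟨q m₁, …, q m_d, p n₁, …, p n_k⟩` of two numerical
semigroups `S₁ = ⟨m₁, …, m_d⟩` and `S₂ = ⟨n₁, …, n_k⟩`, minimally generated by
`m₁ < ⋯ < m_d` and `n₁ < ⋯ < n_k`, where `p ∈ S₁ \ {m₁, …, m_d}`,
`q ∈ S₂ \ {n₁, …, n_k}` and `gcd(p, q) = 1`. -/
structure Gluing where
  d : ℕ
  k : ℕ
  hd : 0 < d
  hk : 0 < k
  m : Fin d → ℕ
  n : Fin k → ℕ
  p : ℕ
  q : ℕ
  hm : StrictMono m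
  hn : StrictMono n
  hmin₁ : ∀ i, m i ∉ AddSubmonoid.closure (Set.range m \ {m i})
  hmin₂ : ∀ j, n j ∉ AddSubmonoid.closure (Set.range n \ {n j})
  hnum₁ : IsNumSgp (AddSubmonoid.closure (Set.range m) : Set ℕ)
  hnum₂ : IsNumSgp (AddSubmonoid.closure (Set.range n) : Set ℕ)
  hp : p ∈ AddSubmonoid.closure (Set.range m)
  hq : q ∈ AddSubmonoid.closure (Set.range n)
  hpm : p ∉ Set.range m
  hqn : q ∉ Set.range n
  hpq : Nat.gcd p q = 1

/-- the numerical semigroup `S₁ = ⟨m₁, …, m_d⟩`. -/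
def Gluing.S₁ (G : Gluing) : Set ℕ := (AddSubmonoid.closure (Set.range G.m) : Set ℕ)

/-- the numerical semigroup `S₂ = ⟨n₁, …, n_k⟩`. -/
def Gluing.S₂ (G : Gluing) : Set ℕ := (AddSubmonoid.closure (Set.range G.n) : Set ℕ)

/-- the glued numerical semigroup `S = ⟨q m₁, …, q m_d, p n₁, …, p n_k⟩`. -/
def Gluing.S (G : Gluing) : Set ℕ :=
  (AddSubmonoid.closure
    ((fun x => G.q * x) '' Set.range G.m ∪ (fun x => G.p * x) '' Set.range G.n) : Set ℕ)

/-- the smallest generator `m₁` of `S₁`. -/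
def Gluing.m₁ (G : Gluing) : ℕ := G.m ⟨0, G.hd⟩

/-- the smallest generator `n₁` of `S₂`. -/
def Gluing.n₁ (G : Gluing) : ℕ := G.n ⟨0, G.hk⟩

/-- the gluing is specific if `ord_{S₂}(q) + l_q(S₂) ≤ ord_{S₁}(p)`. -/
def Gluing.Specific (G : Gluing) : Prop := ordS G.S₂ G.q + lS G.S₂ G.q ≤ ordS G.S₁ G.p

/-- the gluing is nice if `q = a n₁` for some `1 < a ≤ ord_{S₁}(p)`. -/
def Gluing.Nice (G : Gluing) : Prop := ∃ a : ℕ, 1 < a ∧ a ≤ ordS G.S₁ G.p ∧ G.q = a * G.n₁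

/-!
Multiplication by `q` maps `t M₁` into `t M`, which gives `ord_S(q x) ≥ ord_{S₁}(x)`. Conversely,
an element of `T M` splits as `q u + p v` with `u ∈ a M₁`, `v ∈ b M₂` and `a + b = T`; for the
element `q x`, coprimality of `p` and `q` forces `v = q w` and `x = u + p w`. Beyond the reduction
number, adding the multiplicity raises the order by exactly one, so the bound defining `l_y`
extends to `ord(s + y) ≤ ord s + ord y + l_y` for all `s`. Hence, for a specific gluing,
`b ≤ ord_{S₂}(q w) ≤ w (ord q + l_q) ≤ w ord p ≤ ord_{S₁}(p w)` and
`T = a + b ≤ ord u + ord (p w) ≤ ord x`.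
-/

section Order

variable {S : Set ℕ}

theorem mem_nM_succ {s t : ℕ} :
    s ∈ nM S (t + 1) ↔ ∃ z ∈ S \ {0}, ∃ y ∈ nM S t, z + y = s :=
  Set.mem_add

theorem le_of_mem_nM : ∀ {t s : ℕ}, s ∈ nM S t → t ≤ s
  | 0, _, _ => Nat.zero_le _
  | _ + 1, _, hs => by
      obtain ⟨z, hz, y, hy, rfl⟩ := mem_nM_succ.mp hs
      have := le_of_mem_nM hy
      have : z ≠ 0 := hz.2
      omega

theorem bddAbove_setOf_mem_nM (s : ℕ) : BddAbove {t | s ∈ nM S t} :=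
  ⟨s, fun _ ht => le_of_mem_nM ht⟩

theorem le_ordS {s t : ℕ} (h : s ∈ nM S t) : t ≤ ordS S s :=
  le_csSup (bddAbove_setOf_mem_nM s) h

theorem mem_nM_ordS {s : ℕ} (hs : s ∈ S) : s ∈ nM S (ordS S s) :=
  Nat.sSup_mem ⟨0, hs⟩ (bddAbove_setOf_mem_nM s)

theorem ordS_le_self (s : ℕ) : ordS S s ≤ s :=
  csSup_le' fun _ ht => le_of_mem_nM ht

theorem mult_le_of_mem {x : ℕ} (hx : x ∈ S) (h0 : x ≠ 0) : mult S ≤ x :=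
  Nat.sInf_le ⟨hx, h0⟩

end Order

namespace IsNumSgp

variable {S : Set ℕ}

theorem nM_subset (hS : IsNumSgp S) : ∀ {t : ℕ}, nM S t ⊆ S
  | 0 => subset_rfl
  | _ + 1 => by
      rintro _ ⟨z, hz, y, hy, rfl⟩
      exact hS.2.1 z hz.1 y (hS.nM_subset hy)

theorem add_mem_nM (hS : IsNumSgp S) {a : ℕ} (ha : a ∈ S) :
    ∀ {t y : ℕ}, y ∈ nM S t → a + y ∈ nM S t
  | 0, y, hy => hS.2.1 a ha y hy
  | _ + 1, _, hy => by
      obtain ⟨z, hz, y', hy', rfl⟩ := mem_nM_succ.mp hy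
      exact mem_nM_succ.mpr ⟨z, hz, a + y', hS.add_mem_nM ha hy', by ring⟩

theorem add_mem_nM_add (hS : IsNumSgp S) {b y : ℕ} (hy : y ∈ nM S b) :
    ∀ {a x : ℕ}, x ∈ nM S a → x + y ∈ nM S (a + b)
  | 0, x, hx => by simpa using hS.add_mem_nM hx hy
  | a + 1, _, hx => by
      obtain ⟨z, hz, x', hx', rfl⟩ := mem_nM_succ.mp hx
      rw [Nat.add_right_comm]
      exact mem_nM_succ.mpr ⟨z, hz, x' + y, hS.add_mem_nM_add hy hx', by ring⟩

theorem ordS_add_ordS_le (hS : IsNumSgp S) {x y : ℕ} (hx : x ∈ S) (hy : y ∈ S) :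
    ordS S x + ordS S y ≤ ordS S (x + y) :=
  le_ordS (hS.add_mem_nM_add (mem_nM_ordS hy) (mem_nM_ordS hx))

theorem mul_mem (hS : IsNumSgp S) {x : ℕ} (hx : x ∈ S) : ∀ w : ℕ, x * w ∈ S
  | 0 => hS.1
  | w + 1 => hS.2.1 _ (hS.mul_mem hx w) _ hx

theorem mul_ordS_le_ordS_mul (hS : IsNumSgp S) {x : ℕ} (hx : x ∈ S) :
    ∀ w : ℕ, w * ordS S x ≤ ordS S (x * w)
  | 0 => by simp
  | w + 1 => by
      have := hS.ordS_add_ordS_le (hS.mul_mem hx w) hx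
      have := hS.mul_ordS_le_ordS_mul hx w
      rw [Nat.mul_succ, Nat.succ_mul]
      omega

theorem mult_mem (hS : IsNumSgp S) : mult S ∈ S \ {0} := by
  obtain ⟨a, ha⟩ := (hS.2.2.union (Set.finite_singleton 0)).exists_notMem
  simp only [Set.mem_union, Set.mem_singleton_iff, not_or] at ha
  exact Nat.sInf_mem ⟨a, not_not.mp ha.1, ha.2⟩

theorem mult_add_mem_nM_succ (hS : IsNumSgp S) {t y : ℕ} (hy : y ∈ nM S t) :
    mult S + y ∈ nM S (t + 1) :=
  mem_nM_succ.mpr ⟨mult S, hS.mult_mem, y, hy, rfl⟩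

theorem exists_conductor (hS : IsNumSgp S) : ∃ c : ℕ, ∀ y, c ≤ y → y ∈ S := by
  obtain ⟨B, hB⟩ := hS.2.2.bddAbove
  exact ⟨B + 1, fun y hy => by_contra fun h => by have := hB h; omega⟩

theorem mem_nM_of_le (hS : IsNumSgp S) {c : ℕ} (hc : ∀ y, c ≤ y → y ∈ S) :
    ∀ {t y : ℕ}, t * mult S + c ≤ y → y ∈ nM S t
  | 0, y, hy => hc y (by omega)
  | t + 1, y, hy => by
      rw [Nat.succ_mul] at hy
      obtain ⟨y', rfl⟩ : ∃ y', y = mult S + y' := ⟨y - mult S, by omega⟩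
      exact hS.mult_add_mem_nM_succ (hS.mem_nM_of_le hc (by omega))

theorem mem_nM_succ_cases (hS : IsNumSgp S) :
    ∀ {t s : ℕ}, s ∈ nM S (t + 1) →
      (∃ y ∈ nM S t, s = mult S + y) ∨ (t + 1) * (mult S + 1) ≤ s
  | 0, _, hs => by
      obtain ⟨z, hz, y, hy, rfl⟩ := mem_nM_succ.mp hs
      rcases eq_or_ne z (mult S) with rfl | hne
      · exact .inl ⟨y, hy, rfl⟩
      · have := mult_le_of_mem hz.1 hz.2
        exact .inr (by omega)
  | t + 1, _, hs => by
      obtain ⟨z, hz, y, hy, rfl⟩ := mem_nM_succ.mp hs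
      rcases eq_or_ne z (mult S) with rfl | hne
      · exact .inl ⟨y, hy, rfl⟩
      have := mult_le_of_mem hz.1 hz.2
      rcases hS.mem_nM_succ_cases hy with ⟨y', hy', rfl⟩ | hy
      · exact .inl ⟨z + y', mem_nM_succ.mpr ⟨z, hz, y', hy', rfl⟩, by ring⟩
      · exact .inr (by rw [Nat.succ_mul]; omega)

theorem nM_redNum_succ (hS : IsNumSgp S) :
    nM S (redNum S + 1) = (fun y => mult S + y) '' nM S (redNum S) := by
  obtain ⟨c, hc⟩ := hS.exists_conductor
  refine Nat.sInf_mem (s := {r | nM S (r + 1) = (fun y => mult S + y) '' nM S r})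
    ⟨c, Set.Subset.antisymm (fun s hs => ?_) ?_⟩
  · rcases hS.mem_nM_succ_cases hs with ⟨y, hy, rfl⟩ | hs
    · exact ⟨y, hy, rfl⟩
    · have : (c + 1) * (mult S + 1) = c * mult S + c + mult S + 1 := by ring
      exact ⟨s - mult S, hS.mem_nM_of_le hc (by omega), by simp only; omega⟩
  · rintro _ ⟨y, hy, rfl⟩
    exact hS.mult_add_mem_nM_succ hy

theorem nM_succ_eq_image (hS : IsNumSgp S) {t : ℕ} (ht : redNum S ≤ t) :
    nM S (t + 1) = (fun y => mult S + y) '' nM S t := by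
  induction t, ht using Nat.le_induction with
  | base => exact hS.nM_redNum_succ
  | succ t _ ih =>
    refine Set.Subset.antisymm ?_ ?_
    · rintro _ ⟨z, hz, _, hy, rfl⟩
      rw [ih] at hy
      obtain ⟨y, hy, rfl⟩ := hy
      exact ⟨z + y, mem_nM_succ.mpr ⟨z, hz, y, hy, rfl⟩, by simp only; ring⟩
    · rintro _ ⟨y, hy, rfl⟩
      exact hS.mult_add_mem_nM_succ hy

theorem ordS_mult_add (hS : IsNumSgp S) {y : ℕ} (hy : y ∈ S) (hr : redNum S ≤ ordS S y) :
    ordS S (mult S + y) = ordS S y + 1 := by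
  have hge := le_ordS (hS.mult_add_mem_nM_succ (mem_nM_ordS hy))
  refine le_antisymm ?_ hge
  obtain ⟨T, hT⟩ : ∃ T, ordS S (mult S + y) = T + 1 :=
    ⟨_, (Nat.succ_pred_eq_of_pos (by omega)).symm⟩
  have hmem := mem_nM_ordS (hS.2.1 _ hS.mult_mem.1 _ hy)
  rw [hT, hS.nM_succ_eq_image (by omega)] at hmem
  obtain ⟨y', hy', hyy⟩ := hmem
  obtain rfl : y' = y := by simpa using hyy
  have := le_ordS hy'
  omega

theorem bddAbove_lS_set (hS : IsNumSgp S) (x : ℕ) :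
    BddAbove {t | ∃ s ∈ S, ordS S s ≤ redNum S ∧
      t = ordS S (s + x) - ordS S x - ordS S s} := by
  obtain ⟨c, hc⟩ := hS.exists_conductor
  refine ⟨(redNum S + 1) * mult S + c + x, ?_⟩
  rintro _ ⟨s, -, hs, rfl⟩
  have : s < (redNum S + 1) * mult S + c :=
    lt_of_not_ge fun h => by have := le_ordS (hS.mem_nM_of_le hc h); omega
  have := ordS_le_self (S := S) (s + x)
  omega

theorem ordS_add_le_of_ordS_le_redNum (hS : IsNumSgp S) (x : ℕ) {s : ℕ} (hs : s ∈ S)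
    (h : ordS S s ≤ redNum S) : ordS S (s + x) ≤ ordS S s + ordS S x + lS S x := by
  have : ordS S (s + x) - ordS S x - ordS S s ≤ lS S x :=
    le_csSup (hS.bddAbove_lS_set x) ⟨s, hs, h, rfl⟩
  omega

theorem ordS_add_le (hS : IsNumSgp S) {x : ℕ} (hx : x ∈ S) {s : ℕ} (hs : s ∈ S) :
    ordS S (s + x) ≤ ordS S s + ordS S x + lS S x := by
  induction hn : ordS S s generalizing s with
  | zero => exact hn ▸ hS.ordS_add_le_of_ordS_le_redNum x hs (hn ▸ Nat.zero_le _)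
  | succ k ih =>
    rcases le_or_gt (k + 1) (redNum S) with hle | hlt
    · exact hn ▸ hS.ordS_add_le_of_ordS_le_redNum x hs (hn ▸ hle)
    have hmem := mem_nM_ordS hs
    rw [hn, hS.nM_succ_eq_image (by omega)] at hmem
    obtain ⟨y, hy, rfl⟩ := hmem
    dsimp only at hn ⊢
    have hyS := hS.nM_subset hy
    have hky := le_ordS hy
    have hyk : ordS S y = k := by have := hS.ordS_mult_add hyS (by omega); omega
    have hkyx : k ≤ ordS S (y + x) := le_ordS (add_comm x y ▸ hS.add_mem_nM hx hy)
    have hyx := hS.ordS_mult_add (hS.2.1 _ hyS _ hx) (by omega)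
    rw [add_assoc, hyx]
    have := ih hyS hyk
    omega

theorem ordS_mul_le (hS : IsNumSgp S) {x : ℕ} (hx : x ∈ S) :
    ∀ w : ℕ, ordS S (x * w) ≤ w * (ordS S x + lS S x)
  | 0 => by simpa using ordS_le_self (S := S) 0
  | w + 1 => by
      have := hS.ordS_add_le hx (hS.mul_mem hx w)
      have := hS.ordS_mul_le hx w
      rw [Nat.mul_succ, Nat.succ_mul]
      omega

end IsNumSgp

theorem Nat.one_mem_of_one_mem_addSubmonoidClosure {A : Set ℕ}
    (h : 1 ∈ AddSubmonoid.closure A) : 1 ∈ A := by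
  by_contra hA
  let N : AddSubmonoid ℕ :=
    { carrier := {x | x ≠ 1}
      add_mem' := fun {a b} (ha : a ≠ 1) (hb : b ≠ 1) => show a + b ≠ 1 by omega
      zero_mem' := zero_ne_one }
  have h1 : (1 : ℕ) ∈ N :=
    AddSubmonoid.closure_le.mpr (fun a ha => (ne_of_mem_of_not_mem ha hA : a ≠ 1)) h
  exact h1 rfl

namespace Gluing

variable (G : Gluing)

theorem isNumSgp_S₁ : IsNumSgp G.S₁ := G.hnum₁

theorem isNumSgp_S₂ : IsNumSgp G.S₂ := G.hnum₂

theorem q_pos : 0 < G.q := by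
  refine Nat.pos_of_ne_zero fun hq => G.hpm ?_
  have hp : G.p = 1 := by simpa [hq] using G.hpq
  exact hp ▸ Nat.one_mem_of_one_mem_addSubmonoidClosure (hp ▸ G.hp)

theorem mem_S_iff {s : ℕ} :
    s ∈ G.S ↔ ∃ u ∈ G.S₁, ∃ v ∈ G.S₂, G.q * u + G.p * v = s := by
  have hmul (a : ℕ) {ι : Type} (f : ι → ℕ) :
      AddSubmonoid.closure ((fun x => a * x) '' Set.range f) =
      (AddSubmonoid.closure (Set.range f)).map (AddMonoidHom.mulLeft a) := by
    rw [AddMonoidHom.map_mclosure]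
    rfl
  simp only [Gluing.S, SetLike.mem_coe, AddSubmonoid.closure_union, hmul, AddSubmonoid.mem_sup,
    AddSubmonoid.mem_map, AddMonoidHom.coe_mulLeft]
  constructor
  · rintro ⟨_, ⟨u, hu, rfl⟩, _, ⟨v, hv, rfl⟩, rfl⟩
    exact ⟨u, hu, v, hv, rfl⟩
  · rintro ⟨u, hu, v, hv, rfl⟩
    exact ⟨_, ⟨u, hu, rfl⟩, _, ⟨v, hv, rfl⟩, rfl⟩

theorem q_mul_mem_S {x : ℕ} (hx : x ∈ G.S₁) : G.q * x ∈ G.S :=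
  G.mem_S_iff.mpr ⟨x, hx, 0, G.isNumSgp_S₂.1, by ring⟩

theorem q_mul_mem_nM : ∀ {t x : ℕ}, x ∈ nM G.S₁ t → G.q * x ∈ nM G.S t
  | 0, _, hx => G.q_mul_mem_S hx
  | _ + 1, _, hx => by
      obtain ⟨z, hz, y, hy, rfl⟩ := mem_nM_succ.mp hx
      have hqz : G.q * z ≠ 0 := mul_ne_zero G.q_pos.ne' hz.2
      exact mem_nM_succ.mpr ⟨G.q * z, ⟨G.q_mul_mem_S hz.1, hqz⟩, G.q * y, q_mul_mem_nM hy, by ring⟩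

theorem exists_of_mem_nM : ∀ {T s : ℕ}, s ∈ nM G.S T →
    ∃ a b u v, u ∈ nM G.S₁ a ∧ v ∈ nM G.S₂ b ∧ s = G.q * u + G.p * v ∧ T = a + b
  | 0, _, hs => by
      obtain ⟨u, hu, v, hv, rfl⟩ := G.mem_S_iff.mp hs
      exact ⟨0, 0, u, v, hu, hv, rfl, rfl⟩
  | _ + 1, _, hs => by
      obtain ⟨z, hz, y, hy, rfl⟩ := mem_nM_succ.mp hs
      obtain ⟨a, b, u, v, hu, hv, rfl, rfl⟩ := exists_of_mem_nM hy
      obtain ⟨u', hu', v', hv', rfl⟩ := G.mem_S_iff.mp hz.1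
      rcases eq_or_ne u' 0 with rfl | hu'0
      · have hv'0 : v' ≠ 0 := by rintro rfl; exact hz.2 (by simp)
        exact ⟨a, b + 1, u, v' + v, hu, mem_nM_succ.mpr ⟨v', ⟨hv', hv'0⟩, v, hv, rfl⟩,
          by ring, by ring⟩
      · exact ⟨a + 1, b, u' + u, v' + v, mem_nM_succ.mpr ⟨u', ⟨hu', hu'0⟩, u, hu, rfl⟩,
          G.isNumSgp_S₂.add_mem_nM hv' hv, by ring, by ring⟩

theorem exists_eq_of_q_mul_eq {x u v : ℕ} (h : G.q * x = G.q * u + G.p * v) :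
    ∃ w, v = G.q * w ∧ x = u + G.p * w := by
  have hdvd : G.q ∣ G.p * v :=
    (Nat.dvd_add_right (dvd_mul_right _ u)).mp (h ▸ dvd_mul_right _ x)
  obtain ⟨w, rfl⟩ := (Nat.Coprime.symm G.hpq).dvd_of_dvd_mul_left hdvd
  refine ⟨w, rfl, Nat.eq_of_mul_eq_mul_left G.q_pos ?_⟩
  rw [h]
  ring

end Gluing

/-- for a specific gluing `S` of `S₁` and `S₂`,
`ord_S(qx) = ord_{S₁}(x)` for every `x ∈ S₁`. -/
theorem stmt12 (G : Gluing) (hG : G.Specific) :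
    ∀ x ∈ G.S₁, ordS G.S (G.q * x) = ordS G.S₁ x := by
  intro x hx
  refine le_antisymm ?_ (le_ordS (G.q_mul_mem_nM (mem_nM_ordS hx)))
  obtain ⟨a, b, u, v, hu, hv, hqx, hab⟩ := G.exists_of_mem_nM (mem_nM_ordS (G.q_mul_mem_S hx))
  obtain ⟨w, rfl, rfl⟩ := G.exists_eq_of_q_mul_eq hqx
  have hS₁ := G.isNumSgp_S₁
  calc ordS G.S (G.q * (u + G.p * w)) = a + b := hab
    _ ≤ ordS G.S₁ u + ordS G.S₂ (G.q * w) := add_le_add (le_ordS hu) (le_ordS hv)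
    _ ≤ ordS G.S₁ u + w * (ordS G.S₂ G.q + lS G.S₂ G.q) :=
      Nat.add_le_add_left (G.isNumSgp_S₂.ordS_mul_le G.hq w) _
    _ ≤ ordS G.S₁ u + w * ordS G.S₁ G.p := Nat.add_le_add_left (Nat.mul_le_mul_left w hG) _
    _ ≤ ordS G.S₁ u + ordS G.S₁ (G.p * w) :=
      Nat.add_le_add_left (hS₁.mul_ordS_le_ordS_mul G.hp w) _
    _ ≤ ordS G.S₁ (u + G.p * w) :=
      hS₁.ordS_add_ordS_le (hS₁.nM_subset hu) (hS₁.mul_mem G.hp w)
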